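/- arXiv:2207.05854 — 5 statements merged into one kernel-verified Lean document; each statement's English description precedes it below -/
import Mathlib

section
/- If ζ is preserved by the loop body (for all states, ζ implies [env;aux;ctrl;plant]ζ) and the unfriendliness condition ρ holds (for all s, e, e₁, if ζ(s,e) and R(e,e₁) then there exists an execution of env ending with e = e₁), then for all s, e₀, e, if ζ(s,e₀) and R(e₀,e) hold, every execution of aux;ctrl;plant from the state with environment value e preserves ζ(s,e). -/
/-- Relational composition of two reachability relations. -/
def seqComp {S : Type*} (α β : S → S → Prop) : S → S → Prop :=
  fun ω ν => ∃ μ, α ω μ ∧ β μ ν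

/-- Theorem 1: states are pairs (s, e) of a plant state and an environment value.
`env` only modifies the environment component; `acp = aux;ctrl;plant` only
modifies the plant component. If ζ is preserved by the loop body (γ) and the
unfriendliness condition ρ holds, then from any state satisfying ζ(s,e₀) with
R(e₀,e), every execution of aux;ctrl;plant from the state with environment
value e preserves ζ(s,e). -/
theorem exploiting_controller_prevented
    {Sp E : Type*}
    (env aux ctrl plant : (Sp × E) → (Sp × E) → Prop)
    (ζ : Sp → E → Prop) (R : E → E → Prop)
    -- env only modifies the environment variable
    (henv : ∀ ω ν, env ω ν → ν.1 = ω.1)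
    -- aux;ctrl;plant does not modify the environment variable
    (hacp : ∀ ω ν, seqComp aux (seqComp ctrl plant) ω ν → ν.2 = ω.2)
    -- γ : ζ is preserved by the loop body env;aux;ctrl;plant
    (γ : ∀ ω : Sp × E, ζ ω.1 ω.2 →
      ∀ ν, seqComp env (seqComp aux (seqComp ctrl plant)) ω ν → ζ ν.1 ν.2)
    -- ρ : unfriendliness, env can always realize any R-successor value
    (ρ : ∀ (s : Sp) (e e₁ : E), ζ s e → R e e₁ →
      ∃ ν : Sp × E, env (s, e) ν ∧ ν.2 = e₁) :
    ∀ (s : Sp) (e₀ e : E), ζ s e₀ → R e₀ e →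
      ∀ ν, seqComp aux (seqComp ctrl plant) (s, e) ν → ζ ν.1 ν.2 := by
  intro s e₀ e hζ hR ν hν
  obtain ⟨μ, henvμ, hμe⟩ := ρ s e₀ e hζ hR
  have hμ1 : μ.1 = s := henv _ _ henvμ
  have hμ : μ = (s, e) := Prod.ext hμ1 hμe
  exact γ (s, e₀) hζ ν ⟨μ, henvμ, hμ ▸ hν⟩
end

section
/- Braking preserves ζ₂: let a_n^min > 0, a_s^min ≥ a_n^min, v ≥ 0, and suppose v² ≤ 2 a_n^min (x_c − x). If the vehicle evolves as x(t) = x + v t − a_s^min t²/2, v(t) = v − a_s^min t for t ∈ [0, τ] with v(t) ≥ 0 throughout, then v(τ)² ≤ 2 a_n^min (x_c − x(τ)). -/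
/-- Braking preserves ζ₂: decelerating with a_s^min ≥ a_n^min from a state
satisfying v² ≤ 2 a_n^min (x_c − x) keeps the invariant as long as the
velocity stays nonnegative. -/
theorem braking_preserves_zeta2
    (x v xc anmin asmin τ : ℝ)
    (hmin : 0 < anmin) (hsa : anmin ≤ asmin) (hv : 0 ≤ v)
    (hζ : v ^ 2 ≤ 2 * anmin * (xc - x))
    (hτ : 0 ≤ τ)
    (hvel : ∀ t : ℝ, 0 ≤ t → t ≤ τ → 0 ≤ v - asmin * t) :
    (v - asmin * τ) ^ 2 ≤
      2 * anmin * (xc - (x + v * τ - asmin * τ ^ 2 / 2)) := by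
  have h := hvel τ hτ le_rfl
  nlinarith [mul_nonneg (sub_nonneg.2 hsa) hτ, mul_nonneg hτ h]
end

section
/- The corrected controller test preserves ζ₂ under worst-case acceleration: if a_n^min > 0, a_n^max > 0, T > 0, v ≥ 0, and x_c − x ≥ v T + a_n^max T²/2 + (v + a_n^max T)²/(2 a_n^min), then for any acceleration a with a ≤ a_n^max and any t ∈ [0, T] with v + a t ≥ 0, it holds that (v + a t)² ≤ 2 a_n^min (x_c − x − v t − a t²/2). -/
/-- The corrected controller test preserves ζ₂ under worst-case acceleration:
if the safe test of Model 4 holds, then ζ₂ holds at all times t ≤ T along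
the double-integrator evolution with any acceleration a ≤ a_n^max, as long
as velocity stays nonnegative. -/
theorem safe_test_preserves_zeta2
    (x v xc anmin anmax T : ℝ)
    (hmin : 0 < anmin) (hmax : 0 < anmax) (hT : 0 < T) (hv : 0 ≤ v)
    (hsafe : xc - x ≥ v * T + anmax * T ^ 2 / 2 +
      (v + anmax * T) ^ 2 / (2 * anmin)) :
    ∀ a t : ℝ, a ≤ anmax → 0 ≤ t → t ≤ T → 0 ≤ v + a * t →
      (v + a * t) ^ 2 ≤ 2 * anmin * (xc - x - v * t - a * t ^ 2 / 2) := by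
  intro a t ha ht htT hvat
  have hvmax : 0 ≤ v + anmax * t := by nlinarith
  have key1 : (v + a * t) ^ 2 + 2 * anmin * v * t + anmin * a * t ^ 2 ≤
      (v + anmax * t) ^ 2 + 2 * anmin * v * t + anmin * anmax * t ^ 2 := by
    nlinarith [mul_nonneg (mul_nonneg (sub_nonneg.2 ha) ht) (add_nonneg hvat hvmax),
      mul_nonneg hmin.le (mul_nonneg (sub_nonneg.2 ha) (sq_nonneg t))]
  have key2 : (v + anmax * t) ^ 2 + 2 * anmin * v * t + anmin * anmax * t ^ 2 ≤
      (v + anmax * T) ^ 2 + 2 * anmin * v * T + anmin * anmax * T ^ 2 := by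
    have hvT : 0 ≤ v + anmax * T := by nlinarith
    nlinarith [mul_nonneg (mul_nonneg hmax.le (sub_nonneg.2 htT)) (add_nonneg hvmax hvT),
      mul_nonneg (mul_nonneg hmin.le (sub_nonneg.2 htT)) hv,
      mul_nonneg (mul_nonneg (mul_nonneg hmin.le hmax.le) (sub_nonneg.2 htT)) (by linarith : (0:ℝ) ≤ T + t)]
  have hsafe' : 2 * anmin * (xc - x) ≥ 2 * anmin * (v * T + anmax * T ^ 2 / 2)
      + (v + anmax * T) ^ 2 := by
    have h2 : (0:ℝ) < 2 * anmin := by linarith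
    have h3 : (v + anmax * T) ^ 2 / (2 * anmin) ≤ (xc - x) - v * T - anmax * T ^ 2 / 2 := by
      linarith
    rw [div_le_iff₀ h2] at h3
    nlinarith [h3]
  nlinarith [key1, key2, hsafe']
end

section
/- The unchallenged-controller condition χ₁ holds for Model 3: for all reals x, v, x_c, a, a_n^min, T with a_n^min > 0, T > 0, v ≥ 0, if x ≤ x_c, the environment assumption x_c − x ≥ v²/(2 a_n^min) holds, the aux requirement holds (namely: if v + a T ≥ 0 then v T + a T²/2 ≤ v²/(2 a_n^min), and if v + a T < 0 then a ≤ −a_n^min), then for every t ∈ [0, T] with v + a s ≥ 0 for all s ∈ [0, t], it holds that x + v t + a t²/2 ≤ x_c. -/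
/-- The unchallenged-controller condition χ₁ for Model 3: the over-constrained
environment and aux assumptions preserve x ≤ x_c along the plant without any
controller. -/
theorem chi1_model3
    (x v xc a anmin T : ℝ)
    (hmin : 0 < anmin) (hT : 0 < T) (hv : 0 ≤ v)
    (hinv : x ≤ xc)
    (henv : xc - x ≥ v ^ 2 / (2 * anmin))
    (hreq₁ : v + a * T ≥ 0 → v * T + a * T ^ 2 / 2 ≤ v ^ 2 / (2 * anmin))
    (hreq₂ : v + a * T < 0 → a ≤ -anmin) :
    ∀ t : ℝ, 0 ≤ t → t ≤ T → (∀ s : ℝ, 0 ≤ s → s ≤ t → 0 ≤ v + a * s) →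
      x + v * t + a * t ^ 2 / 2 ≤ xc := by
  intro t ht0 htT hvel
  have hvt : 0 ≤ v + a * t := hvel t ht0 le_rfl
  have key : v * t + a * t ^ 2 / 2 ≤ v ^ 2 / (2 * anmin) := by
    rcases le_or_gt 0 (v + a * T) with hc | hc
    · have h1 := hreq₁ hc
      -- p(T) - p(t) = (T - t)(v + a(T+t)/2) ≥ 0
      rcases le_or_gt 0 a with ha | ha
      · nlinarith [mul_nonneg (sub_nonneg.mpr htT) hv, mul_nonneg (mul_nonneg ha ht0) (sub_nonneg.mpr htT)]
      · nlinarith [mul_nonneg (sub_nonneg.mpr htT) hc, mul_nonneg (mul_nonneg (le_of_lt (neg_pos.mpr ha)) ht0) (sub_nonneg.mpr htT)]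
    · have ha := hreq₂ hc
      have h2 : (-a - anmin) * (2 * v * t + a * t ^ 2) ≥ 0 := by
        have : 0 ≤ 2 * v * t + a * t ^ 2 := by nlinarith [mul_nonneg ht0 hvt, mul_nonneg ht0 hv]
        nlinarith
      rw [le_div_iff₀ (by positivity : (0:ℝ) < 2 * anmin)]
      nlinarith [sq_nonneg (v + a * t)]
  linarith
end

section
/- Witness for ψ₂ in Model 4: there exist reals x, v, x_c and a choice of acceleration a with −a_n^min ≤ a ≤ a_n^max satisfying the instantiated predicate: ζ(x,v,x_c,−a_n^min) holds, ζ(x,v,x_c,a) fails, and after evolving the double integrator with input a for some time t ∈ [0,T] with nonnegative velocity, ζ at the resulting state with argument −a_n^min still fails — for concrete parameter values a_n^min = 1, a_n^max = 1, T = 1. -/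
/-- The invariant candidate ζ(x,v,x_c,a) of Model 4, instantiated with
a_n^min = 1 and T = 1. -/
def zeta (x v xc a : ℝ) : Prop :=
  (v + a * 1 ≥ 0 → (v + a * 1) ^ 2 ≤ 2 * 1 * (xc - x - v * 1 - a * 1 ^ 2 / 2)) ∧
  (v + a * 1 < 0 → v ^ 2 ≤ 2 * 1 * (xc - x))

/-- Witness for ψ₂ in Model 4 with a_n^min = 1, a_n^max = 1, T = 1: there is a
state satisfying the environment assumption and ζ instantiated with −a_n^min,
an acceleration a within the aux bounds for which ζ fails, and a plant
evolution (with nonnegative velocity) after which ζ with argument −a_n^min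
still fails. -/
theorem psi2_witness :
    ∃ x v xc a t : ℝ,
      xc - x ≥ v ^ 2 / (2 * 1) ∧
      -1 ≤ a ∧ a ≤ 1 ∧
      zeta x v xc (-1) ∧
      ¬ zeta x v xc a ∧
      0 ≤ t ∧ t ≤ 1 ∧ (∀ s : ℝ, 0 ≤ s → s ≤ t → 0 ≤ v + a * s) ∧
      ¬ zeta (x + v * t + a * t ^ 2 / 2) (v + a * t) xc (-1) := by
  refine ⟨0, 0, 0, 1, 1, by norm_num, by norm_num, le_refl 1, ⟨by norm_num, by norm_num⟩,
    ?_, by norm_num, le_refl 1, fun s hs _ => by nlinarith, ?_⟩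
  · simp only [zeta]
    push_neg
    intro h
    have := h (by norm_num)
    norm_num at this
  · simp only [zeta]
    push_neg
    intro h
    have := h (by norm_num)
    norm_num at this
end
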